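/- Let n = 2, τ > 0, and let A, B, H(λ,K) be as in the context. Let 0 < λ_2 ≤ λ_N. Then the minimum over all row vectors K ∈ ℝ^{1×2} of max( ρ(H(λ_2,K)), ρ(H(λ_N,K)) ) equals √((λ_N − λ_2)/(λ_N + λ_2)), and this minimum is attained exactly at K* = [2λ_2/(τ^2(λ_2 + λ_N)λ_N), 2/(λ_N τ)]. -/

import Mathlib

open Matrix

/-- The n×n system matrix `A`: ones on the diagonal, `τ` on the superdiagonal
(for `n = 2` this is `[[1, τ], [0, 1]]`). -/
noncomputable def Amat (n : ℕ) (τ : ℝ) : Matrix (Fin n) (Fin n) ℝ :=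
  Matrix.of fun i j => if (j : ℕ) = (i : ℕ) then 1 else if (j : ℕ) = (i : ℕ) + 1 then τ else 0

/-- The n×1 input matrix `B`: last entry `τ`, all other entries `0`
(for `n = 2` this is `[0, τ]ᵀ`). -/
noncomputable def Bmat (n : ℕ) (τ : ℝ) : Matrix (Fin n) (Fin 1) ℝ :=
  Matrix.of fun i _ => if (i : ℕ) = n - 1 then τ else 0

/-- `H(λ, K) = A - λ B K`. -/
noncomputable def Hmat (n : ℕ) (τ : ℝ) (lam : ℝ) (K : Matrix (Fin 1) (Fin n) ℝ) :
    Matrix (Fin n) (Fin n) ℝ :=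
  Amat n τ - lam • (Bmat n τ * K)

/-- Spectral radius of a real matrix: the largest modulus of its complex eigenvalues. -/
noncomputable def specRad {n : ℕ} (M : Matrix (Fin n) (Fin n) ℝ) : ℝ :=
  sSup ((‖·‖) '' spectrum ℂ (M.map (Complex.ofReal ·)))

/-!
If `r₁, r₂ ∈ ℂ` are the eigenvalues of a real `2 × 2` matrix `M`, then `r₁ r₂ = det M`, so
`ρ(M)² ≥ |det M|`; explicitly `ρ(M) = √(det M)` when `tr² ≤ 4 det` (conjugate eigenvalues) and
`ρ(M) = (|tr| + √(tr² - 4 det)) / 2` otherwise.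

Here `det H(λ, K) = 1 - λ s` with `s = τ K₂ - τ² K₁`. The affine functions `1 - λ₂ s` and
`1 - λ_N s` cannot both have modulus below `r = (λ_N - λ₂)/(λ_N + λ₂)`, which gives the lower bound
`√r`, and both moduli are at most `r` only for `s = 2/(λ₂ + λ_N)`. Then `det H(λ_N, K) = -r < 0`,
so `H(λ_N, K)` has real eigenvalues and `ρ(H(λ_N, K)) ≤ √r` forces `tr H(λ_N, K) = 0`; these two
conditions single out `K*`. Conversely, at `K*` the eigenvalues of `H(λ_N, K*)` are `±√r` and those
of `H(λ₂, K*)` are conjugate of modulus `√(det) = √r`.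
-/

theorem max_abs_add_abs_sub_of_nonneg (a : ℝ) {b : ℝ} (hb : 0 ≤ b) :
    max |a + b| |a - b| = |a| + b := by
  rcases le_total 0 a with ha | ha
  · have h : |a + b| = a + b := abs_of_nonneg (by positivity)
    rw [h, abs_of_nonneg ha, max_eq_left (abs_sub_le_iff.mpr ⟨by linarith, by linarith⟩)]
  · have h : |a - b| = -a + b := by rw [abs_of_nonpos (by linarith)]; ring
    rw [h, abs_of_nonpos ha, max_eq_right (abs_le.mpr ⟨by linarith, by linarith⟩)]

theorem exists_add_eq_mul_eq (t d : ℂ) : ∃ r₁ r₂ : ℂ, r₁ + r₂ = t ∧ r₁ * r₂ = d := by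
  obtain ⟨w, hw⟩ := IsAlgClosed.exists_eq_mul_self (t ^ 2 / 4 - d)
  exact ⟨t / 2 + w, t / 2 - w, by ring, by linear_combination hw⟩

namespace Matrix

variable {𝕜 : Type*} [Field 𝕜]

theorem mem_spectrum_fin_two (M : Matrix (Fin 2) (Fin 2) 𝕜) (z : 𝕜) :
    z ∈ spectrum 𝕜 M ↔ z ^ 2 - M.trace * z + M.det = 0 := by
  rw [spectrum.mem_iff, isUnit_iff_isUnit_det, isUnit_iff_ne_zero, not_not, det_fin_two,
    det_fin_two M, trace_fin_two]
  simp only [sub_apply, algebraMap_matrix_apply, Algebra.algebraMap_self, RingHom.id_apply,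
    Fin.isValue, ↓reduceIte, one_ne_zero, zero_ne_one]
  constructor <;> intro h <;> linear_combination h

theorem spectrum_fin_two_eq_pair (M : Matrix (Fin 2) (Fin 2) 𝕜) {r₁ r₂ : 𝕜}
    (hs : r₁ + r₂ = M.trace) (hp : r₁ * r₂ = M.det) : spectrum 𝕜 M = {r₁, r₂} := by
  ext z
  rw [mem_spectrum_fin_two, ← hs, ← hp, Set.mem_insert_iff, Set.mem_singleton_iff,
    ← sub_eq_zero (a := z), ← sub_eq_zero (a := z), ← mul_eq_zero]
  constructor <;> intro h <;> linear_combination h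

end Matrix

section SpectralRadius

variable (M : Matrix (Fin 2) (Fin 2) ℝ)

theorem specRad_fin_two_eq_max {r₁ r₂ : ℂ} (hs : r₁ + r₂ = M.trace) (hp : r₁ * r₂ = M.det) :
    specRad M = max ‖r₁‖ ‖r₂‖ := by
  rw [specRad, (M.map _).spectrum_fin_two_eq_pair (r₁ := r₁) (r₂ := r₂), Set.image_pair,
    csSup_pair]
  · simp [hs, trace_fin_two]
  · simp [hp, det_fin_two]

theorem sqrt_abs_det_le_specRad : √|M.det| ≤ specRad M := by
  obtain ⟨r₁, r₂, hs, hp⟩ := exists_add_eq_mul_eq M.trace M.det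
  have hnorm : ‖r₁‖ * ‖r₂‖ = |M.det| := by
    rw [← norm_mul, hp, Complex.norm_real, Real.norm_eq_abs]
  have hmax : 0 ≤ max ‖r₁‖ ‖r₂‖ := (norm_nonneg _).trans (le_max_left _ _)
  rw [specRad_fin_two_eq_max M hs hp, ← hnorm, ← Real.sqrt_mul_self hmax]
  exact Real.sqrt_le_sqrt
    (mul_le_mul (le_max_left _ _) (le_max_right _ _) (norm_nonneg _) hmax)

theorem specRad_fin_two_of_four_mul_det_le (h : 4 * M.det ≤ M.trace ^ 2) :
    specRad M = (|M.trace| + √(M.trace ^ 2 - 4 * M.det)) / 2 := by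
  set D := √(M.trace ^ 2 - 4 * M.det)
  have hD : D ^ 2 = M.trace ^ 2 - 4 * M.det := Real.sq_sqrt (by linarith)
  rw [specRad_fin_two_eq_max M (r₁ := ((M.trace + D) / 2 : ℝ)) (r₂ := ((M.trace - D) / 2 : ℝ))
    (by push_cast; ring) (by rw [← Complex.ofReal_mul]; congr 1; linear_combination (-1/4) * hD)]
  simp only [Complex.norm_real, Real.norm_eq_abs]
  rw [add_div, sub_div, max_abs_add_abs_sub_of_nonneg _ (by positivity), abs_div, abs_two]
  ring

theorem specRad_fin_two_of_sq_trace_le (h : M.trace ^ 2 ≤ 4 * M.det) :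
    specRad M = √M.det := by
  set w := √(M.det - M.trace ^ 2 / 4)
  have hw : w ^ 2 = M.det - M.trace ^ 2 / 4 := Real.sq_sqrt (by linarith)
  set r : ℂ := (M.trace / 2 : ℝ) + w * Complex.I with hr
  have hs : r + (starRingEnd ℂ) r = M.trace := by
    rw [hr, map_add, map_mul, Complex.conj_ofReal, Complex.conj_ofReal, Complex.conj_I]
    push_cast; ring
  have hp : r * (starRingEnd ℂ) r = M.det := by
    rw [Complex.mul_conj, Complex.normSq_add_mul_I]; congr 1; linear_combination hw
  rw [specRad_fin_two_eq_max M hs hp, Complex.norm_conj, max_self,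
    ← Real.sqrt_sq (norm_nonneg r), ← Complex.normSq_eq_norm_sq,
    ← Complex.ofReal_inj.mp (hp.symm.trans (Complex.mul_conj r))]

theorem specRad_le_sqrt_neg_det_iff (hd : M.det ≤ 0) :
    specRad M ≤ √(-M.det) ↔ M.trace = 0 := by
  have hq : √(-M.det) ^ 2 = -M.det := Real.sq_sqrt (neg_nonneg.mpr hd)
  have hroot : 2 * √(-M.det) ≤ √(M.trace ^ 2 - 4 * M.det) :=
    Real.le_sqrt_of_sq_le (by nlinarith [sq_nonneg M.trace])
  rw [specRad_fin_two_of_four_mul_det_le M (by nlinarith [sq_nonneg M.trace])]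
  constructor
  · intro h
    exact abs_nonpos_iff.mp (by linarith)
  · intro h
    rw [h, abs_zero, show (0 : ℝ) ^ 2 - 4 * M.det = (2 * √(-M.det)) ^ 2 by
        linear_combination -4 * hq,
      Real.sqrt_sq (by positivity)]
    linarith

end SpectralRadius

theorem div_le_max_abs_one_sub_mul {a b : ℝ} (ha : 0 ≤ a) (hb : 0 ≤ b) (hab : 0 < b + a)
    (s : ℝ) : (b - a) / (b + a) ≤ max |1 - a * s| |1 - b * s| := by
  rw [div_le_iff₀ hab]
  rcases le_total (s * (b + a)) 2 with hs | hs
  · nlinarith [le_max_left |1 - a * s| |1 - b * s|, le_abs_self (1 - a * s)]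
  · nlinarith [le_max_right |1 - a * s| |1 - b * s|, neg_le_abs (1 - b * s)]

theorem mul_eq_two_of_abs_one_sub_mul_le {a b s : ℝ} (ha : 0 < a) (hb : 0 < b)
    (h₁ : |1 - a * s| ≤ (b - a) / (b + a)) (h₂ : |1 - b * s| ≤ (b - a) / (b + a)) :
    s * (b + a) = 2 := by
  have hr : (b - a) / (b + a) * (b + a) = b - a := div_mul_cancel₀ _ (by positivity)
  rw [abs_le] at h₁ h₂
  apply le_antisymm <;> nlinarith [h₁.2, h₂.1]

section Feedback

variable {τ l2 lN : ℝ} (K : Matrix (Fin 1) (Fin 2) ℝ)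

theorem Hmat_two_eq (lam : ℝ) :
    Hmat 2 τ lam K = !![1, τ; -(lam * τ * K 0 0), 1 - lam * τ * K 0 1] := by
  ext i j
  fin_cases i <;> fin_cases j <;> simp [Hmat, Amat, Bmat, Matrix.mul_apply, mul_assoc]

theorem Hmat_two_trace (lam : ℝ) : (Hmat 2 τ lam K).trace = 2 - lam * (τ * K 0 1) := by
  rw [Hmat_two_eq, trace_fin_two_of]; ring

theorem Hmat_two_det (lam : ℝ) :
    (Hmat 2 τ lam K).det = 1 - lam * (τ * K 0 1 - τ ^ 2 * K 0 0) := by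
  rw [Hmat_two_eq, det_fin_two_of]; ring

theorem eq_optimal_gain_iff (hτ : τ ≠ 0) (hN : lN ≠ 0) (hS : l2 + lN ≠ 0) :
    K = !![2 * l2 / (τ ^ 2 * (l2 + lN) * lN), 2 / (lN * τ)] ↔
      lN * (τ * K 0 1) = 2 ∧ (τ * K 0 1 - τ ^ 2 * K 0 0) * (lN + l2) = 2 := by
  constructor
  · rintro rfl
    simp only [of_apply, cons_val', cons_val_zero, cons_val_one, cons_val_fin_one]
    constructor
    · field_simp
    · field_simp
      ring
  · rintro ⟨h₁, h₂⟩
    ext i j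
    fin_cases i; fin_cases j
    · simp only [Fin.zero_eta, Fin.isValue, of_apply, cons_val', cons_val_zero, cons_val_fin_one]
      field_simp
      linear_combination (lN + l2) * h₁ - lN * h₂
    · simp only [Fin.zero_eta, Fin.mk_one, Fin.isValue, of_apply, cons_val', cons_val_one,
        cons_val_fin_one]
      field_simp
      linear_combination h₁

theorem sqrt_le_max_specRad_Hmat (h2 : 0 ≤ l2) (hN : 0 ≤ lN) (hS : 0 < lN + l2) :
    √((lN - l2) / (lN + l2)) ≤ max (specRad (Hmat 2 τ l2 K)) (specRad (Hmat 2 τ lN K)) :=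
  calc √((lN - l2) / (lN + l2))
      _ ≤ max √|(Hmat 2 τ l2 K).det| √|(Hmat 2 τ lN K).det| := by
        rw [← Real.sqrt_monotone.map_max, Hmat_two_det, Hmat_two_det]
        exact Real.sqrt_le_sqrt (div_le_max_abs_one_sub_mul h2 hN hS _)
      _ ≤ _ := max_le_max (sqrt_abs_det_le_specRad _) (sqrt_abs_det_le_specRad _)

theorem Hmat_two_det_of_gain (hS : lN + l2 ≠ 0)
    (hs : (τ * K 0 1 - τ ^ 2 * K 0 0) * (lN + l2) = 2) :
    (Hmat 2 τ l2 K).det = (lN - l2) / (lN + l2) ∧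
      (Hmat 2 τ lN K).det = -((lN - l2) / (lN + l2)) := by
  rw [Hmat_two_det, Hmat_two_det]
  constructor <;> field_simp
  · linear_combination -l2 * hs
  · linear_combination -lN * hs

theorem optimal_gain_of_max_specRad_Hmat_le (h2 : 0 < l2) (h2N : l2 ≤ lN)
    (h : max (specRad (Hmat 2 τ l2 K)) (specRad (Hmat 2 τ lN K)) ≤ √((lN - l2) / (lN + l2))) :
    lN * (τ * K 0 1) = 2 ∧ (τ * K 0 1 - τ ^ 2 * K 0 0) * (lN + l2) = 2 := by
  set r := (lN - l2) / (lN + l2)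
  have hr : 0 ≤ r := div_nonneg (by linarith) (by linarith)
  have habs (lam : ℝ) (h : specRad (Hmat 2 τ lam K) ≤ √r) :
      |1 - lam * (τ * K 0 1 - τ ^ 2 * K 0 0)| ≤ r := by
    rw [← Hmat_two_det, ← Real.sqrt_le_sqrt_iff hr]
    exact (sqrt_abs_det_le_specRad _).trans h
  obtain ⟨hρ₂, hρN⟩ := max_le_iff.mp h
  have hs := mul_eq_two_of_abs_one_sub_mul_le h2 (h2.trans_le h2N) (habs _ hρ₂) (habs _ hρN)
  have hdetN := (Hmat_two_det_of_gain K (by linarith) hs).2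
  rw [← neg_neg r, ← hdetN, specRad_le_sqrt_neg_det_iff _ (by linarith), Hmat_two_trace] at hρN
  exact ⟨by linarith, hs⟩

theorem max_specRad_Hmat_le_of_optimal_gain (h2 : 0 < l2) (h2N : l2 ≤ lN)
    (htr : lN * (τ * K 0 1) = 2) (hs : (τ * K 0 1 - τ ^ 2 * K 0 0) * (lN + l2) = 2) :
    max (specRad (Hmat 2 τ l2 K)) (specRad (Hmat 2 τ lN K)) ≤ √((lN - l2) / (lN + l2)) := by
  obtain ⟨hdet₂, hdetN⟩ := Hmat_two_det_of_gain K (by linarith) hs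
  set r := (lN - l2) / (lN + l2) with hr
  have hr0 : 0 ≤ r := div_nonneg (by linarith) (by linarith)
  refine max_le (le_of_eq ?_) ?_
  · have hg : 2 - l2 * (τ * K 0 1) = τ * K 0 1 * (lN - l2) := by linear_combination -htr
    have hcomplex : (Hmat 2 τ l2 K).trace ^ 2 ≤ 4 * (Hmat 2 τ l2 K).det := by
      rw [hdet₂, Hmat_two_trace, hr, mul_div_assoc', le_div_iff₀ (by linarith), hg,
        show (4 : ℝ) = (lN * (τ * K 0 1)) ^ 2 by rw [htr]; norm_num]
      nlinarith [mul_nonneg (mul_nonneg (sq_nonneg (τ * K 0 1)) (sub_nonneg.mpr h2N))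
        (sq_nonneg l2)]
    rw [specRad_fin_two_of_sq_trace_le _ hcomplex, hdet₂]
  · rw [← neg_neg r, ← hdetN, specRad_le_sqrt_neg_det_iff _ (by linarith), Hmat_two_trace]
    linarith

end Feedback

/-- for `n = 2`, the minimum over all row vectors `K ∈ ℝ^{1×2}` of
`max(ρ(H(λ₂,K)), ρ(H(λ_N,K)))` equals `√((λ_N − λ₂)/(λ_N + λ₂))`, and the minimum is
attained exactly at `K* = [2λ₂/(τ²(λ₂+λ_N)λ_N), 2/(λ_N τ)]`. -/
theorem stmt_9 (τ : ℝ) (hτ : 0 < τ) (l2 lN : ℝ) (h2 : 0 < l2) (h2N : l2 ≤ lN) :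
    (∀ K : Matrix (Fin 1) (Fin 2) ℝ,
        Real.sqrt ((lN - l2) / (lN + l2))
          ≤ max (specRad (Hmat 2 τ l2 K)) (specRad (Hmat 2 τ lN K)))
    ∧ (∀ K : Matrix (Fin 1) (Fin 2) ℝ,
        max (specRad (Hmat 2 τ l2 K)) (specRad (Hmat 2 τ lN K))
            = Real.sqrt ((lN - l2) / (lN + l2))
          ↔ K = !![2 * l2 / (τ ^ 2 * (l2 + lN) * lN), 2 / (lN * τ)]) := by
  have hN : 0 < lN := h2.trans_le h2N
  have lower (K : Matrix (Fin 1) (Fin 2) ℝ) :=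
    sqrt_le_max_specRad_Hmat (τ := τ) K h2.le hN.le (by linarith)
  refine ⟨lower, fun K => ?_⟩
  rw [le_antisymm_iff, and_iff_left (lower K), eq_optimal_gain_iff K hτ.ne' hN.ne' (by linarith)]
  exact ⟨optimal_gain_of_max_specRad_Hmat_le K h2 h2N,
    fun ⟨htr, hs⟩ => max_specRad_Hmat_le_of_optimal_gain K h2 h2N htr hs⟩
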